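/- Let s ≥ 2 be odd (so 2 divides s - 1), and write ν_2 for the 2-adic valuation. Then ν_2(ord_{2^ℓ}(s)) = 0 if ℓ ≤ ν_2(s-1); ν_2(ord_{2^ℓ}(s)) = 1 if ν_2(s-1) < ℓ ≤ ν_2(s^2-1); and ν_2(ord_{2^ℓ}(s)) = 1 + ℓ - ν_2(s^2-1) if ℓ > ν_2(s^2-1). -/

import Mathlib

/-!
Modulo `2 ^ ℓ` the order of an odd `s` is the least `2 ^ k` with `2 ^ ℓ ∣ s ^ 2 ^ k - 1`.
Lifting the exponent gives `ν₂(s ^ 2 ^ k - 1) = ν₂(s ^ 2 - 1) + k - 1` for `k ≥ 1`, while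
`ν₂(s - 1)` decides whether `k = 0` already works; this yields the three cases.
-/

theorem natCast_pow_eq_one_iff_dvd {m s n : ℕ} (hs : s ≠ 0) :
    (s : ZMod m) ^ n = 1 ↔ m ∣ s ^ n - 1 := by
  rw [← Nat.cast_pow, ← Nat.cast_one, ZMod.natCast_eq_natCast_iff, Nat.ModEq.comm,
    Nat.modEq_iff_dvd' (Nat.one_le_pow _ _ (Nat.pos_of_ne_zero hs))]

theorem natCast_pow_eq_one_iff_le_padicValNat {p s n ℓ : ℕ} [Fact p.Prime] (hs : 1 < s)
    (hn : n ≠ 0) : (s : ZMod (p ^ ℓ)) ^ n = 1 ↔ ℓ ≤ padicValNat p (s ^ n - 1) := by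
  have := Nat.one_lt_pow hn hs
  rw [natCast_pow_eq_one_iff_dvd (by omega), padicValNat_dvd_iff_le (by omega)]

theorem padicValNat_pow_two_pow_sub_one {s e : ℕ} (hs : 1 < s) (hodd : Odd s) (he : e ≠ 0) :
    padicValNat 2 (s ^ 2 ^ e - 1) + 1 = padicValNat 2 (s ^ 2 - 1) + e := by
  have lte := fun n (hn : n ≠ 0) (heven : Even n) =>
    padicValNat.pow_two_sub_pow hs (Nat.Odd.sub_odd hodd odd_one).two_dvd hodd.not_two_dvd_nat
      hn heven
  have h2e := lte (2 ^ e) (by positivity) ((Nat.even_pow' he).2 even_two)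
  have h2 := lte 2 two_ne_zero even_two
  simp only [one_pow, padicValNat.prime_pow, padicValNat_self] at h2e h2
  omega

theorem padicValNat_orderOf_eq_of_pow_eq_one {M : Type*} [Monoid M] {x : M} {p n : ℕ}
    [Fact p.Prime] (hnot : ¬x ^ p ^ n = 1) (hfin : x ^ p ^ (n + 1) = 1) :
    padicValNat p (orderOf x) = n + 1 := by
  rw [orderOf_eq_prime_pow hnot hfin, padicValNat.prime_pow]

theorem stmt18 (s ℓ : ℕ) (hs : 2 ≤ s) (hodd : Odd s) :
    (ℓ ≤ padicValNat 2 (s - 1) →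
      padicValNat 2 (orderOf (s : ZMod (2 ^ ℓ))) = 0) ∧
    (padicValNat 2 (s - 1) < ℓ ∧ ℓ ≤ padicValNat 2 (s ^ 2 - 1) →
      padicValNat 2 (orderOf (s : ZMod (2 ^ ℓ))) = 1) ∧
    (ℓ > padicValNat 2 (s ^ 2 - 1) →
      padicValNat 2 (orderOf (s : ZMod (2 ^ ℓ))) =
        1 + ℓ - padicValNat 2 (s ^ 2 - 1)) := by
  have hcrit (e : ℕ) :
      (s : ZMod (2 ^ ℓ)) ^ 2 ^ e = 1 ↔ ℓ ≤ padicValNat 2 (s ^ 2 ^ e - 1) :=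
    natCast_pow_eq_one_iff_le_padicValNat hs (by positivity)
  have hval (e : ℕ) (he : e ≠ 0) := padicValNat_pow_two_pow_sub_one hs hodd he
  refine ⟨fun h => ?_, fun ⟨hlt, hle⟩ => ?_, fun h => ?_⟩
  · have hone : (s : ZMod (2 ^ ℓ)) = 1 := by simpa using (hcrit 0).2 (by simpa using h)
    simp [hone]
  · exact padicValNat_orderOf_eq_of_pow_eq_one (n := 0)
      (by simpa using (hcrit 0).not.2 (by simpa using hlt)) ((hcrit 1).2 (by simpa using hle))
  · obtain ⟨n, rfl⟩ : ∃ n, ℓ = padicValNat 2 (s ^ 2 - 1) + n :=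
      ⟨_, (Nat.add_sub_of_le h.le).symm⟩
    have hn := hval n (by omega)
    have hn1 := hval (n + 1) n.succ_ne_zero
    rw [padicValNat_orderOf_eq_of_pow_eq_one ((hcrit n).not.2 (by omega))
      ((hcrit (n + 1)).2 (by omega))]
    omega
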